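/- arXiv:2504.02607 — 3 statements merged into one kernel-verified Lean document; each statement's English description precedes it below -/
import Mathlib

section
/- If A = I - E is a real n×n matrix where every entry of E is bounded in absolute value by ε ≤ 1/n, then det(A) ≥ 1 - nε. -/
/-!
Induction on `n` by Gaussian elimination at the last pivot. The pivot `1 - E (last) (last)` is at
least `1 - ε > 0`, and the Schur complement is again of the form `1 - E'` with
`|E' i j| ≤ ε + ε² / (1 - ε) = ε / (1 - ε)`. Since `(n - 1) · ε / (1 - ε) ≤ 1` and
`(1 - ε) · (1 - (n - 1) · ε / (1 - ε)) = 1 - n ε`, the bound passes from size `n - 1` to size `n`.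
-/

lemma abs_add_mul_inv_one_sub_mul_le {a b c d ε : ℝ} (ha : |a| ≤ ε) (hb : |b| ≤ ε)
    (hc : |c| ≤ ε) (hd : |d| ≤ ε) (hε : ε < 1) :
    |a + b * (1 - c)⁻¹ * d| ≤ ε / (1 - ε) := by
  have hε0 : 0 ≤ ε := (abs_nonneg a).trans ha
  have hpos : 0 < 1 - c := by linarith [le_abs_self c]
  calc |a + b * (1 - c)⁻¹ * d| ≤ |a| + |b| * (1 - c)⁻¹ * |d| := by
        grw [abs_add_le, abs_mul, abs_mul, abs_of_pos (inv_pos.mpr hpos)]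
    _ ≤ ε + ε * (1 - ε)⁻¹ * ε := by
        have : (1 - c)⁻¹ ≤ (1 - ε)⁻¹ := inv_anti₀ (by linarith) (by linarith [le_abs_self c])
        gcongr
    _ = ε / (1 - ε) := by field_simp [(by linarith : (1 : ℝ) - ε ≠ 0)]; ring

namespace Matrix

variable {K : Type*} [Field K] {n : ℕ}

def schurComplementLast (M : Matrix (Fin (n + 1)) (Fin (n + 1)) K) : Matrix (Fin n) (Fin n) K :=
  of fun i j => M i.castSucc j.castSucc -
    M i.castSucc (Fin.last n) * (M (Fin.last n) (Fin.last n))⁻¹ * M (Fin.last n) j.castSucc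

theorem det_eq_mul_det_schurComplementLast (M : Matrix (Fin (n + 1)) (Fin (n + 1)) K)
    (hM : M (Fin.last n) (Fin.last n) ≠ 0) :
    M.det = M (Fin.last n) (Fin.last n) * M.schurComplementLast.det := by
  have hlast : Fin.natAdd n (0 : Fin 1) = Fin.last n := rfl
  have hcast (i : Fin n) : Fin.castAdd 1 i = i.castSucc := rfl
  rw [← det_submatrix_equiv_self finSumFinEquiv M, ← fromBlocks_toBlocks (M.submatrix _ _)]
  have hD : (M.submatrix finSumFinEquiv finSumFinEquiv).toBlocks₂₂ =
      of fun _ _ => M (Fin.last n) (Fin.last n) := by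
    ext i j
    simp [toBlocks₂₂, Subsingleton.elim i 0, Subsingleton.elim j 0, hlast]
  rw [hD]
  have : Invertible (of fun _ _ => M (Fin.last n) (Fin.last n) : Matrix (Fin 1) (Fin 1) K) :=
    invertibleOfIsUnitDet _ (by simpa using hM)
  rw [det_fromBlocks₂₂]
  congr 1
  · simp
  · congr 1
    ext i j
    simp [schurComplementLast, toBlocks₁₁, toBlocks₁₂, toBlocks₂₁, mul_apply,
      invOf_eq_nonsing_inv, hlast, hcast]

theorem schurComplementLast_one_sub (B : Matrix (Fin (n + 1)) (Fin (n + 1)) K) :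
    (1 - B).schurComplementLast =
      1 - of fun i j => B i.castSucc j.castSucc +
        B i.castSucc (Fin.last n) * (1 - B (Fin.last n) (Fin.last n))⁻¹ *
          B (Fin.last n) j.castSucc := by
  ext i j
  simp only [schurComplementLast, of_apply, sub_apply, one_apply, Fin.castSucc_inj, if_true,
    if_neg (Fin.castSucc_ne_last _), if_neg (Fin.castSucc_ne_last _).symm]
  ring

theorem one_sub_mul_le_det_one_sub {ε : ℝ} (B : Matrix (Fin n) (Fin n) ℝ)
    (hB : ∀ i j, |B i j| ≤ ε) (hnε : n * ε ≤ 1) : 1 - n * ε ≤ (1 - B).det := by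
  induction n generalizing ε with
  | zero => simp
  | succ n ih =>
    push_cast at hnε ⊢
    obtain hε1 | hε1 := le_or_gt 1 ε
    -- `ε ≥ 1` only happens for a `1 × 1` matrix, whose pivot may vanish.
    · have hε0 : 0 ≤ ε := (abs_nonneg _).trans (hB 0 0)
      obtain rfl : n = 0 := Nat.eq_zero_of_le_zero (by exact_mod_cast (by nlinarith : (n : ℝ) ≤ 0))
      rw [det_fin_one, sub_apply, one_apply_eq, Nat.cast_zero]
      linarith [le_abs_self (B 0 0), hB 0 0]
    have hpivot : 1 - ε ≤ 1 - B (Fin.last n) (Fin.last n) := by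
      linarith [le_abs_self (B (Fin.last n) (Fin.last n)), hB (Fin.last n) (Fin.last n)]
    have hε' : n * (ε / (1 - ε)) ≤ 1 := by
      rw [← mul_div_assoc, div_le_one (by linarith)]
      linarith
    have hpivot_ne : (1 - B) (Fin.last n) (Fin.last n) ≠ 0 := by
      rw [sub_apply, one_apply_eq]; linarith
    rw [det_eq_mul_det_schurComplementLast _ hpivot_ne, schurComplementLast_one_sub, sub_apply,
      one_apply_eq]
    calc 1 - (n + 1) * ε = (1 - ε) * (1 - n * (ε / (1 - ε))) := by
          field_simp [(by linarith : (1 : ℝ) - ε ≠ 0)]; ring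
      _ ≤ _ := mul_le_mul hpivot (ih _ (fun i j => abs_add_mul_inv_one_sub_mul_le
          (hB _ _) (hB _ _) (hB _ _) (hB _ _) hε1) hε') (by linarith) (by linarith)

end Matrix

theorem stmt_0_general (n : ℕ) (A E : Matrix (Fin n) (Fin n) ℝ) (ε : ℝ)
    (hA : A = 1 - E) (hE : ∀ i j, |E i j| ≤ ε) (hε : ε ≤ 1 / n) :
    A.det ≥ 1 - n * ε := by
  subst hA
  refine E.one_sub_mul_le_det_one_sub hE ?_
  calc (n : ℝ) * ε ≤ n * (1 / n) := by gcongr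
    _ ≤ 1 := by rw [mul_one_div]; exact div_self_le_one _

theorem stmt_0 (n : ℕ) (hn : 0 < n) (A E : Matrix (Fin n) (Fin n) ℝ) (ε : ℝ)
    (hA : A = 1 - E) (hE : ∀ i j, |E i j| ≤ ε) (hε : ε ≤ 1 / n) :
    A.det ≥ 1 - n * ε :=
  stmt_0_general n A E ε hA hE hε
end

section
/- Let φ(x) = x + Σ_{i=1}^{N} w_i k(x, c_i) where k is a Gaussian kernel with isotropic bandwidth σ, w_i ∈ ℝⁿ are weight vectors, and c_i ∈ ℝⁿ centers. If each component |w_{i,j}| < σ e^{1/2}/(nN) for all i, j, then the Jacobian of φ has positive determinant at every point x ∈ ℝⁿ. -/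
/-!
At `x`, the Jacobian of `φ` is `1 + A` with `A = ∑ᵢ ∇ₓk(x, cᵢ) ⊗ wᵢ`. Since `s ↦ s e^{-s²/2}` peaks
at `s = 1`, each gradient has norm at most `e^{-1/2}/σ`, while `‖wᵢ‖ ≤ ∑ⱼ |w_{i,j}| < σ e^{1/2}/N`;
hence `‖A‖ < 1`. Then every `1 + tA`, `t ∈ [0, 1]`, is invertible (Neumann series), so
`t ↦ det (1 + tA)` has no zero on `[0, 1]` and keeps the sign of `det 1 = 1`.
-/

open Real

lemma mul_exp_neg_sq_div_two_le (s : ℝ) : s * exp (-s ^ 2 / 2) ≤ exp (-(1 / 2)) := by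
  have hs : s ≤ exp (s ^ 2 / 2 - 1 / 2) := by
    nlinarith [add_one_le_exp (s ^ 2 / 2 - 1 / 2), sq_nonneg (s - 1)]
  calc s * exp (-s ^ 2 / 2) ≤ exp (s ^ 2 / 2 - 1 / 2) * exp (-s ^ 2 / 2) :=
        mul_le_mul_of_nonneg_right hs (exp_pos _).le
    _ = exp (-(1 / 2)) := by rw [← exp_add]; ring_nf

section Gaussian

variable {E : Type*} [NormedAddCommGroup E] [InnerProductSpace ℝ E]

noncomputable def gaussianKernel (σ : ℝ) (c x : E) : ℝ := exp (-‖x - c‖ ^ 2 / (2 * σ ^ 2))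

lemma hasFDerivAt_gaussianKernel (σ : ℝ) (c x : E) :
    HasFDerivAt (gaussianKernel σ c)
      ((-(gaussianKernel σ c x / σ ^ 2)) • innerSL ℝ (x - c)) x := by
  have hsq : HasFDerivAt (fun y : E => ‖y - c‖ ^ 2) (2 • innerSL ℝ (x - c)) x := by
    simpa using ((hasFDerivAt_id x).sub_const c).norm_sq
  have hk : gaussianKernel σ c = fun y => exp (-‖y - c‖ ^ 2 * (2 * σ ^ 2)⁻¹) := by
    funext y; rw [gaussianKernel, div_eq_mul_inv]
  refine hk ▸ (hsq.neg.mul_const (2 * σ ^ 2)⁻¹).exp.congr_fderiv ?_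
  ext v
  simp only [Pi.neg_apply, mul_inv_rev, neg_mul, map_sub, smul_neg, neg_apply,
    smul_apply, sub_apply, coe_innerSL_apply, nsmul_eq_mul,
    Nat.cast_ofNat, smul_eq_mul, neg_smul, neg_inj]
  ring

lemma norm_fderiv_gaussianKernel_le {σ : ℝ} (hσ : 0 < σ) (c x : E) :
    ‖fderiv ℝ (gaussianKernel σ c) x‖ ≤ exp (-(1 / 2)) / σ := by
  rw [(hasFDerivAt_gaussianKernel σ c x).fderiv, norm_smul, innerSL_apply_norm, norm_neg,
    Real.norm_of_nonneg (by unfold gaussianKernel; positivity), le_div_iff₀ hσ]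
  calc gaussianKernel σ c x / σ ^ 2 * ‖x - c‖ * σ
      = ‖x - c‖ / σ * exp (-(‖x - c‖ / σ) ^ 2 / 2) := by unfold gaussianKernel; field_simp
    _ ≤ exp (-(1 / 2)) := mul_exp_neg_sq_div_two_le _

end Gaussian

section Determinant

variable {E : Type*} [NormedAddCommGroup E] [NormedSpace ℝ E] [FiniteDimensional ℝ E]

lemma ContinuousLinearMap.det_ne_zero_of_isUnit {f : E →L[ℝ] E} (hf : IsUnit f) : f.det ≠ 0 :=
  ((LinearMap.isUnit_iff_isUnit_det _).mp (hf.map toLinearMapRingHom)).ne_zero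

lemma ContinuousLinearMap.det_id_add_ne_zero {A : E →L[ℝ] E} (hA : ‖A‖ < 1) :
    (ContinuousLinearMap.id ℝ E + A).det ≠ 0 := by
  have : CompleteSpace E := FiniteDimensional.complete ℝ E
  refine det_ne_zero_of_isUnit ?_
  have hu := (Units.oneSub (-A) (by rwa [norm_neg])).isUnit
  rwa [Units.val_oneSub, sub_neg_eq_add, one_def] at hu

lemma ContinuousLinearMap.det_id_add_pos {A : E →L[ℝ] E} (hA : ‖A‖ < 1) :
    0 < (ContinuousLinearMap.id ℝ E + A).det := by
  set F : ℝ → ℝ := fun t => (ContinuousLinearMap.id ℝ E + t • A).det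
  have hF : Continuous F := continuous_det.comp (by fun_prop)
  have hF_ne : ∀ t ∈ Set.Icc (0 : ℝ) 1, F t ≠ 0 := fun t ht =>
    det_id_add_ne_zero <| calc
      ‖t • A‖ ≤ 1 * ‖A‖ := by
        rw [norm_smul, Real.norm_of_nonneg ht.1]; gcongr; exact ht.2
      _ < 1 := by rwa [one_mul]
  have hF0 : F 0 = 1 := by simp [F, ContinuousLinearMap.det, coe_id]
  by_contra! h
  obtain ⟨t, ht, hFt⟩ := intermediate_value_Icc' zero_le_one hF.continuousOn
    ⟨by simpa [F] using h, hF0.ge.trans' zero_le_one⟩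
  exact hF_ne t ht hFt

end Determinant

lemma EuclideanSpace.norm_le_sum_norm {ι : Type*} [Fintype ι] (x : EuclideanSpace ℝ ι) :
    ‖x‖ ≤ ∑ i, ‖x i‖ := by
  rw [EuclideanSpace.norm_eq, Real.sqrt_le_left (by positivity)]
  exact Finset.sum_sq_le_sq_sum_of_nonneg fun i _ => norm_nonneg _

lemma EuclideanSpace.norm_lt_card_mul_of_abs_lt {ι : Type*} [Fintype ι] [Nonempty ι]
    {x : EuclideanSpace ℝ ι} {b : ℝ} (h : ∀ i, |x i| < b) : ‖x‖ < Fintype.card ι * b := by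
  calc ‖x‖ ≤ ∑ i, |x i| := norm_le_sum_norm x
    _ < ∑ _i : ι, b := Finset.sum_lt_sum_of_nonempty Finset.univ_nonempty fun i _ => h i
    _ = Fintype.card ι * b := by simp

section Residual

variable {ι E : Type*} [Fintype ι] [NormedAddCommGroup E] [NormedSpace ℝ E]
  {k : ι → E → ℝ} {w : ι → E} {x : E}

lemma hasFDerivAt_id_add_sum_smul (hk : ∀ i, DifferentiableAt ℝ (k i) x) :
    HasFDerivAt (fun y => y + ∑ i, k i y • w i)
      (ContinuousLinearMap.id ℝ E + ∑ i, (fderiv ℝ (k i) x).smulRight (w i)) x :=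
  (hasFDerivAt_id x).add (.fun_sum fun i _ => (hk i).hasFDerivAt.smul_const (w i))

lemma det_fderiv_id_add_sum_smul_pos [FiniteDimensional ℝ E]
    (hk : ∀ i, DifferentiableAt ℝ (k i) x) (hsmall : ∑ i, ‖fderiv ℝ (k i) x‖ * ‖w i‖ < 1) :
    0 < (fderiv ℝ (fun y => y + ∑ i, k i y • w i) x).det := by
  rw [(hasFDerivAt_id_add_sum_smul hk).fderiv]
  refine ContinuousLinearMap.det_id_add_pos ((norm_sum_le _ _).trans_lt ?_)
  simpa only [ContinuousLinearMap.norm_smulRight_apply] using hsmall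

end Residual

theorem stmt_5 (n N : ℕ) (hn : 0 < n) (hN : 0 < N) (σ : ℝ) (hσ : 0 < σ)
    (w c : Fin N → EuclideanSpace ℝ (Fin n))
    (hw : ∀ i j, |w i j| < σ * Real.exp (1 / 2) / (n * N))
    (φ : EuclideanSpace ℝ (Fin n) → EuclideanSpace ℝ (Fin n))
    (hφ : φ = fun x => x + ∑ i, Real.exp (-‖x - c i‖ ^ 2 / (2 * σ ^ 2)) • w i) :
    ∀ x, 0 < (fderiv ℝ φ x).det := by
  subst hφ
  intro x
  have : NeZero n := ⟨hn.ne'⟩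
  have : NeZero N := ⟨hN.ne'⟩
  refine det_fderiv_id_add_sum_smul_pos (k := fun i => gaussianKernel σ (c i))
    (fun i => (hasFDerivAt_gaussianKernel σ (c i) x).differentiableAt) ?_
  calc ∑ i, ‖fderiv ℝ (gaussianKernel σ (c i)) x‖ * ‖w i‖
      < ∑ _i : Fin N, exp (-(1 / 2)) / σ * (n * (σ * exp (1 / 2) / (n * N))) := by
        refine Finset.sum_lt_sum_of_nonempty Finset.univ_nonempty fun i _ => ?_
        have hwi := EuclideanSpace.norm_lt_card_mul_of_abs_lt (hw i)
        rw [Fintype.card_fin] at hwi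
        exact mul_lt_mul' (norm_fderiv_gaussianKernel_le hσ (c i) x) hwi (norm_nonneg _)
          (by positivity)
    _ = 1 := by
        rw [Finset.sum_const, Finset.card_fin, nsmul_eq_mul, exp_neg]
        field_simp
end

section
/- Let k(x,c) = exp(-½ (x-c)ᵀ Σ⁻¹ (x-c)) be a multivariate Gaussian kernel with symmetric positive-definite covariance Σ, and let Σ⁻¹ = Q D Qᵀ be its eigendecomposition with Q orthogonal and D diagonal positive. Then for each coordinate j and all x, |∂k/∂x_j (x,c)| ≤ Σ_{l=1}^{n} |Q_{j,l}| e^{-1/2} √(D_{l,l}). -/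
/-!
Writing `Σ⁻¹ = Q D Qᵀ` and `z = Qᵀ (x - c)`, the partial derivative is
`-(Q D z)_j · exp(-½ ∑ₗ D_l z_l²)`. Bounding the Gaussian factor by the single term
`exp(-½ D_l z_l²)` and using `|y| e^{-y²/2} ≤ e^{-1/2}` with `y = √D_l z_l` bounds the `l`-th
summand of `(Q D z)_j` by `|Q_{jl}| e^{-1/2} √D_l`.
-/

open Matrix

theorem abs_mul_exp_neg_half_sq_le (u : ℝ) :
    |u| * Real.exp (-(1 / 2) * u ^ 2) ≤ Real.exp (-(1 / 2)) := by
  -- `|u| ≤ (1 + u²) / 2 ≤ exp ((u² - 1) / 2)`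
  have h : |u| ≤ Real.exp ((u ^ 2 - 1) / 2) := by
    nlinarith [Real.add_one_le_exp ((u ^ 2 - 1) / 2), sq_nonneg (|u| - 1), sq_abs u]
  calc |u| * Real.exp (-(1 / 2) * u ^ 2)
      ≤ Real.exp ((u ^ 2 - 1) / 2) * Real.exp (-(1 / 2) * u ^ 2) := by gcongr
    _ = Real.exp (-(1 / 2)) := by rw [← Real.exp_add]; ring_nf

theorem mul_abs_mul_exp_neg_half_mul_sq_le {d : ℝ} (hd : 0 ≤ d) (t : ℝ) :
    d * |t| * Real.exp (-(1 / 2) * (d * t ^ 2)) ≤ Real.exp (-(1 / 2)) * Real.sqrt d := by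
  have key := abs_mul_exp_neg_half_sq_le (Real.sqrt d * t)
  rw [abs_mul, abs_of_nonneg (Real.sqrt_nonneg d), mul_pow, Real.sq_sqrt hd] at key
  calc d * |t| * Real.exp (-(1 / 2) * (d * t ^ 2))
      = Real.sqrt d * (Real.sqrt d * |t| * Real.exp (-(1 / 2) * (d * t ^ 2))) := by
        rw [← mul_assoc (Real.sqrt d), ← mul_assoc (Real.sqrt d), Real.mul_self_sqrt hd]
    _ ≤ Real.sqrt d * Real.exp (-(1 / 2)) := by gcongr
    _ = Real.exp (-(1 / 2)) * Real.sqrt d := mul_comm _ _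

section Gaussian

variable {ι : Type*} [Fintype ι] [DecidableEq ι]

theorem hasFDerivAt_sub_dotProduct_mulVec_sub (A : Matrix ι ι ℝ) (c x : ι → ℝ) :
    HasFDerivAt (fun y => (y - c) ⬝ᵥ A *ᵥ (y - c))
      ((toLinearMap₂' ℝ A).toContinuousBilinearMap.flip (x - c) +
        (toLinearMap₂' ℝ A).toContinuousBilinearMap (x - c)) x := by
  have hsub : HasFDerivAt (fun y : ι → ℝ => y - c) (ContinuousLinearMap.id ℝ _) x :=
    (hasFDerivAt_id x).sub_const c
  have H := (toLinearMap₂' ℝ A).toContinuousBilinearMap.hasFDerivAt_of_bilinear hsub hsub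
  simp only [LinearMap.toContinuousBilinearMap_apply, toLinearMap₂'_apply'] at H
  refine H.congr_fderiv ?_
  ext h
  simp only [ContinuousLinearMap.precompR_apply, ContinuousLinearMap.precompL_apply,
    ContinuousLinearMap.compL_apply, ContinuousLinearMap.comp_id, ContinuousLinearMap.id_apply,
    ContinuousLinearMap.flip_apply, LinearMap.toContinuousBilinearMap_apply, _root_.add_apply]
  ring

theorem fderiv_exp_neg_half_sub_dotProduct_mulVec_sub {A : Matrix ι ι ℝ} (hA : A.IsSymm)
    (c x h : ι → ℝ) :
    fderiv ℝ (fun y => Real.exp (-(1 / 2) * ((y - c) ⬝ᵥ A *ᵥ (y - c)))) x h =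
      -(h ⬝ᵥ A *ᵥ (x - c)) * Real.exp (-(1 / 2) * ((x - c) ⬝ᵥ A *ᵥ (x - c))) := by
  rw [(((hasFDerivAt_sub_dotProduct_mulVec_sub A c x).const_mul (-(1 / 2))).exp).fderiv]
  have hcomm : (x - c) ⬝ᵥ A *ᵥ h = h ⬝ᵥ A *ᵥ (x - c) := by
    rw [dotProduct_mulVec, ← mulVec_transpose, hA.eq, dotProduct_comm]
  simp only [_root_.smul_apply, _root_.add_apply,
    ContinuousLinearMap.flip_apply, LinearMap.toContinuousBilinearMap_apply,
    toLinearMap₂'_apply', hcomm, smul_eq_mul]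
  ring

end Gaussian

section Conjugation

variable {m ι : Type*} [Fintype m] [Fintype ι] [DecidableEq ι]

theorem mul_diagonal_mul_transpose_mulVec (Q : Matrix m ι ℝ) (d : ι → ℝ) (v : m → ℝ) :
    (Q * diagonal d * Qᵀ) *ᵥ v = Q *ᵥ fun l => d l * (Qᵀ *ᵥ v) l := by
  rw [← mulVec_mulVec, ← mulVec_mulVec]
  congr 1
  ext l
  exact mulVec_diagonal _ _ _

theorem dotProduct_mul_diagonal_mul_transpose_mulVec (Q : Matrix m ι ℝ) (d : ι → ℝ) (v : m → ℝ) :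
    v ⬝ᵥ (Q * diagonal d * Qᵀ) *ᵥ v = ∑ l, d l * (Qᵀ *ᵥ v) l ^ 2 := by
  rw [mul_diagonal_mul_transpose_mulVec, dotProduct_mulVec, ← mulVec_transpose, dotProduct]
  exact Finset.sum_congr rfl fun l _ => by ring

theorem abs_mul_diagonal_mul_transpose_mulVec_apply_mul_exp_le (Q : Matrix m ι ℝ) {d : ι → ℝ}
    (hd : ∀ l, 0 ≤ d l) (v : m → ℝ) (j : m) :
    |((Q * diagonal d * Qᵀ) *ᵥ v) j| * Real.exp (-(1 / 2) * (v ⬝ᵥ (Q * diagonal d * Qᵀ) *ᵥ v)) ≤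
      ∑ l, |Q j l| * Real.exp (-(1 / 2)) * Real.sqrt (d l) := by
  rw [dotProduct_mul_diagonal_mul_transpose_mulVec, mul_diagonal_mul_transpose_mulVec]
  set z := Qᵀ *ᵥ v
  have hE : ∀ l, Real.exp (-(1 / 2) * ∑ l, d l * z l ^ 2) ≤
      Real.exp (-(1 / 2) * (d l * z l ^ 2)) := fun l => by
    refine Real.exp_le_exp.2 (mul_le_mul_of_nonpos_left ?_ (by norm_num))
    exact Finset.single_le_sum (f := fun l => d l * z l ^ 2)
      (fun l _ => mul_nonneg (hd l) (sq_nonneg _)) (Finset.mem_univ l)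
  set E := Real.exp (-(1 / 2) * ∑ l, d l * z l ^ 2)
  calc |(Q *ᵥ fun l => d l * z l) j| * E
      ≤ (∑ l, |Q j l| * (d l * |z l|)) * E := by
        gcongr
        refine (Finset.abs_sum_le_sum_abs _ _).trans_eq (Finset.sum_congr rfl fun l _ => ?_)
        rw [abs_mul, abs_mul, abs_of_nonneg (hd l)]
    _ = ∑ l, |Q j l| * (d l * |z l| * E) := by
        rw [Finset.sum_mul]
        exact Finset.sum_congr rfl fun l _ => by ring
    _ ≤ ∑ l, |Q j l| * (d l * |z l| * Real.exp (-(1 / 2) * (d l * z l ^ 2))) := by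
        refine Finset.sum_le_sum fun l _ => mul_le_mul_of_nonneg_left ?_ (abs_nonneg _)
        exact mul_le_mul_of_nonneg_left (hE l) (mul_nonneg (hd l) (abs_nonneg _))
    _ ≤ ∑ l, |Q j l| * (Real.exp (-(1 / 2)) * Real.sqrt (d l)) := by
        refine Finset.sum_le_sum fun l _ => mul_le_mul_of_nonneg_left ?_ (abs_nonneg _)
        exact mul_abs_mul_exp_neg_half_mul_sq_le (hd l) (z l)
    _ = ∑ l, |Q j l| * Real.exp (-(1 / 2)) * Real.sqrt (d l) := by
        simp only [mul_assoc]

end Conjugation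

theorem stmt_12_general (n : ℕ) (S Q : Matrix (Fin n) (Fin n) ℝ) (d : Fin n → ℝ)
    (hd : ∀ l, 0 < d l)
    (hdecomp : S⁻¹ = Q * Matrix.diagonal d * Qᵀ)
    (c : Fin n → ℝ) (k : (Fin n → ℝ) → ℝ)
    (hk : k = fun x => Real.exp (-(1 / 2) * ((x - c) ⬝ᵥ S⁻¹.mulVec (x - c))))
    (j : Fin n) :
    ∀ x, |fderiv ℝ k x (Pi.single j 1)| ≤
      ∑ l, |Q j l| * Real.exp (-(1 / 2)) * Real.sqrt (d l) := by
  intro x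
  have hsymm : S⁻¹.IsSymm := by
    rw [hdecomp, IsSymm, transpose_mul, transpose_mul, transpose_transpose, diagonal_transpose,
      Matrix.mul_assoc]
  rw [hk, fderiv_exp_neg_half_sub_dotProduct_mulVec_sub hsymm, single_dotProduct, one_mul, abs_mul,
    abs_neg, abs_of_pos (Real.exp_pos _), hdecomp]
  exact abs_mul_diagonal_mul_transpose_mulVec_apply_mul_exp_le Q (fun l => (hd l).le) (x - c) j

theorem stmt_12 (n : ℕ) (S Q : Matrix (Fin n) (Fin n) ℝ) (d : Fin n → ℝ)
    (hS : S.PosDef) (hQ : Qᵀ * Q = 1) (hd : ∀ l, 0 < d l)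
    (hdecomp : S⁻¹ = Q * Matrix.diagonal d * Qᵀ)
    (c : Fin n → ℝ) (k : (Fin n → ℝ) → ℝ)
    (hk : k = fun x => Real.exp (-(1 / 2) * ((x - c) ⬝ᵥ S⁻¹.mulVec (x - c))))
    (j : Fin n) :
    ∀ x, |fderiv ℝ k x (Pi.single j 1)| ≤
      ∑ l, |Q j l| * Real.exp (-(1 / 2)) * Real.sqrt (d l) :=
  stmt_12_general n S Q d hd hdecomp c k hk j
end
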